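/- Let (s_k)_{k≥0} be a nonincreasing sequence of positive reals, (a_k) a sequence in ℝ^n with a_k → a_∞, and suppose for all k: (s_k/2)‖a_k − a_∞‖² + D ≥ L^{k+1} + (s_{k+1}/2)‖a_{k+1} − a_∞‖², where D ∈ ℝ and (L^k) is a nonincreasing real sequence. Then for all K ≥ 1, L^K ≤ D + (s_0/(2K))‖a_0 − a_∞‖². -/

import Mathlib

/-! Summing the one-step inequality `L (k+1) ≤ D + E k - E (k+1)`, with `E k = s k / 2 * ‖a k - a∞‖²`,
telescopes to `∑_{k<K} L (k+1) ≤ K D + E 0 - E K ≤ K D + E 0`, and since `L` is nonincreasing the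
left side is at least `K L K`. -/

open Filter Finset

section Telescoping

variable {α : Type*} [Field α] [LinearOrder α] [IsStrictOrderedRing α]

theorem sum_range_succ_le_of_le_sub (f E : ℕ → α) (D : α)
    (hstep : ∀ k, f (k + 1) ≤ D + E k - E (k + 1)) (M : ℕ) :
    ∑ k ∈ range M, f (k + 1) ≤ M * D + (E 0 - E M) :=
  calc ∑ k ∈ range M, f (k + 1) ≤ ∑ k ∈ range M, (D + (E k - E (k + 1))) :=
        sum_le_sum fun k _ => by linarith [hstep k]
    _ = M * D + (E 0 - E M) := by
        rw [sum_add_distrib, sum_range_sub', sum_const, card_range, nsmul_eq_mul]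

theorem Antitone.mul_le_sum_range_succ {L : ℕ → α} (hL : Antitone L) (K : ℕ) :
    K * L K ≤ ∑ k ∈ range K, L (k + 1) :=
  calc (K : α) * L K = ∑ _k ∈ range K, L K := by
        rw [sum_const, card_range, nsmul_eq_mul]
    _ ≤ ∑ k ∈ range K, L (k + 1) :=
        sum_le_sum fun k hk => hL (mem_range.mp hk)

theorem Antitone.le_add_div_of_le_sub {L E : ℕ → α} (hL : Antitone L) (hE : ∀ k, 0 ≤ E k)
    (D : α) (hstep : ∀ k, L (k + 1) ≤ D + E k - E (k + 1)) {K : ℕ} (hK : 0 < K) :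
    L K ≤ D + E 0 / K := by
  have hKpos : (0 : α) < K := by exact_mod_cast hK
  have hmul : K * L K ≤ K * (D + E 0 / K) := by
    rw [mul_add, mul_div_cancel₀ _ hKpos.ne']
    linarith [hL.mul_le_sum_range_succ K, sum_range_succ_le_of_le_sub L E D hstep K, hE K]
  exact le_of_mul_le_mul_left hmul hKpos

end Telescoping

theorem stmt_17_general {n : ℕ} (s : ℕ → ℝ) (hspos : ∀ k, 0 < s k)
    (a : ℕ → EuclideanSpace ℝ (Fin n)) (ainf : EuclideanSpace ℝ (Fin n))
    (D : ℝ) (L : ℕ → ℝ) (hLmono : Antitone L)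
    (hstep : ∀ k, s k / 2 * ‖a k - ainf‖ ^ 2 + D ≥
      L (k + 1) + s (k + 1) / 2 * ‖a (k + 1) - ainf‖ ^ 2) :
    ∀ K : ℕ, 1 ≤ K → L K ≤ D + s 0 / (2 * K) * ‖a 0 - ainf‖ ^ 2 := by
  intro K hK
  have hE : ∀ k, 0 ≤ s k / 2 * ‖a k - ainf‖ ^ 2 := fun k => by
    have := hspos k
    positivity
  have key := hLmono.le_add_div_of_le_sub hE D (fun k => by linarith [hstep k]) hK
  calc L K ≤ D + s 0 / 2 * ‖a 0 - ainf‖ ^ 2 / K := key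
    _ = D + s 0 / (2 * K) * ‖a 0 - ainf‖ ^ 2 := by ring

theorem stmt_17 {n : ℕ} (s : ℕ → ℝ) (hspos : ∀ k, 0 < s k) (hsmono : Antitone s)
    (a : ℕ → EuclideanSpace ℝ (Fin n)) (ainf : EuclideanSpace ℝ (Fin n))
    (ha : Tendsto a atTop (nhds ainf))
    (D : ℝ) (L : ℕ → ℝ) (hLmono : Antitone L)
    (hstep : ∀ k, s k / 2 * ‖a k - ainf‖ ^ 2 + D ≥
      L (k + 1) + s (k + 1) / 2 * ‖a (k + 1) - ainf‖ ^ 2) :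
    ∀ K : ℕ, 1 ≤ K → L K ≤ D + s 0 / (2 * K) * ‖a 0 - ainf‖ ^ 2 :=
  stmt_17_general s hspos a ainf D L hLmono hstep
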